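/- Let p be an odd prime and n = 2p. The nonzero zero-divisors of Z_n fall into exactly two annihilator-equivalence classes, namely [p] and [2] (the class of p and the class of all nonzero even residues), and these two vertices of Γ_E(Z_n) are adjacent; hence Γ_E(Z_n) is isomorphic to K_{1,1} and Ddim(Γ_E(Z_n)) = 1. -/

import Mathlib

/-!
By the Chinese remainder theorem `ZMod (2 * p) ≃+* ZMod 2 × ZMod p`, a product of two domains.
There `x * y = 0` iff in each coordinate `x` or `y` vanishes, so a nonzero zero-divisor has
exactly one zero coordinate and its annihilator depends only on which one it is. This gives
exactly two classes, those of `p ↦ (1, 0)` and of `2 ↦ (0, 2)`, and `p * 2 = 0` joins them.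
In the resulting graph `K₂` one vertex is a resolving dominating set, and no dominating set
of a nonempty graph is empty.
-/

open SimpleGraph

/-- `Zstar R` is the set of nonzero zero-divisors of the commutative ring `R`. -/
def Zstar (R : Type*) [CommRing R] : Set R :=
  {x : R | x ≠ 0 ∧ ∃ y : R, y ≠ 0 ∧ x * y = 0}

/-- `annSet R x` is the annihilator of `x`, i.e. `{y : R | x * y = 0}`. -/
def annSet (R : Type*) [CommRing R] (x : R) : Set R :=
  {y : R | x * y = 0}

/-- Two nonzero zero-divisors are equivalent iff they have the same annihilator. -/
instance zdvSetoid (R : Type*) [CommRing R] : Setoid (Zstar R) :=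
  ⟨fun a b => annSet R a.1 = annSet R b.1, ⟨fun _ => rfl, Eq.symm, Eq.trans⟩⟩

/-- The vertices of the compressed zero-divisor graph `Γ_E(R)`: equivalence
classes `[x]` of nonzero zero-divisors under equality of annihilators. -/
abbrev CZDVertex (R : Type*) [CommRing R] : Type _ :=
  Quotient (zdvSetoid R)

/-- The compressed zero-divisor graph `Γ_E(R)`: distinct classes `[x]` and `[y]`
are adjacent iff `x * y = 0` (which is independent of the chosen representatives). -/
def CZDG (R : Type*) [CommRing R] : SimpleGraph (CZDVertex R) where
  Adj u v := u ≠ v ∧ ∃ a b : Zstar R,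
    (⟦a⟧ : CZDVertex R) = u ∧ (⟦b⟧ : CZDVertex R) = v ∧ (a : R) * b = 0
  symm := by
    constructor
    rintro u v ⟨huv, a, b, ha, hb, hab⟩
    exact ⟨huv.symm, b, a, hb, ha, by rwa [mul_comm]⟩
  loopless := by
    constructor
    rintro u ⟨h, -⟩
    exact h rfl

/-- A set `W` of vertices is resolving if any two distinct vertices have
different distance to some vertex of `W`. -/
def IsResolving {V : Type*} (G : SimpleGraph V) (W : Set V) : Prop :=
  ∀ u v : V, u ≠ v → ∃ w ∈ W, G.dist u w ≠ G.dist v w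

/-- A set `W` of vertices is dominating if every vertex outside `W` is adjacent
to some vertex of `W`. -/
def IsDominating {V : Type*} (G : SimpleGraph V) (W : Set V) : Prop :=
  ∀ v : V, v ∉ W → ∃ w ∈ W, G.Adj v w

/-- The dominant metric dimension `Ddim G`: the minimum cardinality of a set of
vertices that is simultaneously resolving and dominating, with the convention
that it is `0` for a graph with exactly one vertex. -/
noncomputable def Ddim {V : Type*} (G : SimpleGraph V) : ℕ∞ :=
  if Nat.card V = 1 then 0
  else sInf {n : ℕ∞ | ∃ W : Set V, IsResolving G W ∧ IsDominating G W ∧ W.encard = n}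

section DominantMetricDimension

variable {V : Type*}

theorem Ddim_le_encard {G : SimpleGraph V} {W : Set V} (hres : IsResolving G W)
    (hdom : IsDominating G W) : Ddim G ≤ W.encard := by
  unfold Ddim
  split_ifs
  · exact zero_le
  · exact sInf_le ⟨W, hres, hdom, rfl⟩

theorem IsDominating.nonempty [Nonempty V] {G : SimpleGraph V} {W : Set V}
    (hdom : IsDominating G W) : W.Nonempty := by
  obtain ⟨v⟩ := ‹Nonempty V›
  by_cases hv : v ∈ W
  · exact ⟨v, hv⟩
  · obtain ⟨w, hw, -⟩ := hdom v hv
    exact ⟨w, hw⟩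

theorem one_le_Ddim [Nonempty V] (G : SimpleGraph V) (hcard : Nat.card V ≠ 1) : 1 ≤ Ddim G := by
  rw [Ddim, if_neg hcard]
  refine le_sInf ?_
  rintro _ ⟨W, -, hdom, rfl⟩
  exact Set.one_le_encard_iff_nonempty.mpr hdom.nonempty

variable {G : SimpleGraph V} {u v : V}

theorem SimpleGraph.adj_iff_ne_of_forall_eq_or_eq (huv : G.Adj u v)
    (hcover : ∀ w, w = u ∨ w = v) {a b : V} : G.Adj a b ↔ a ≠ b := by
  refine ⟨G.ne_of_adj, fun hab => ?_⟩
  rcases hcover a with rfl | rfl <;> rcases hcover b with rfl | rfl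
  exacts [absurd rfl hab, huv, huv.symm, absurd rfl hab]

theorem SimpleGraph.nonempty_iso_top_fin_two_of_forall_eq_or_eq (huv : G.Adj u v)
    (hcover : ∀ w, w = u ∨ w = v) : Nonempty (G ≃g (⊤ : SimpleGraph (Fin 2))) := by
  have hbij : Function.Bijective ![u, v] := by
    refine ⟨fun i j hij => ?_, fun w => ?_⟩
    · fin_cases i <;> fin_cases j <;> simp_all [G.ne_of_adj huv, (G.ne_of_adj huv).symm]
    · rcases hcover w with rfl | rfl
      exacts [⟨0, rfl⟩, ⟨1, rfl⟩]
  refine ⟨⟨(Equiv.ofBijective _ hbij).symm, ?_⟩⟩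
  intro a b
  rw [top_adj, adj_iff_ne_of_forall_eq_or_eq huv hcover, Ne, Ne, Equiv.apply_eq_iff_eq]

theorem Ddim_eq_one_of_forall_eq_or_eq (huv : G.Adj u v) (hcover : ∀ w, w = u ∨ w = v) :
    Ddim G = 1 := by
  obtain ⟨e⟩ := nonempty_iso_top_fin_two_of_forall_eq_or_eq huv hcover
  have : Nonempty V := ⟨u⟩
  refine le_antisymm ?_ (one_le_Ddim G (by simp [Nat.card_congr e.toEquiv]))
  refine (Ddim_le_encard (W := {u}) ?_ ?_).trans_eq (Set.encard_singleton u)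
  · intro a b hab
    refine ⟨u, rfl, ?_⟩
    rcases hcover a with rfl | rfl <;> rcases hcover b with rfl | rfl <;>
      simp_all [dist_eq_one_iff_adj.mpr huv.symm]
  · intro w hw
    rcases hcover w with rfl | rfl
    exacts [absurd rfl hw, ⟨u, rfl, huv.symm⟩]

end DominantMetricDimension

section Annihilator

variable {R S F : Type*} [CommRing R] [CommRing S] [FunLike F R S] [RingHomClass F R S]

theorem annSet_eq_preimage {f : F} (hf : Function.Injective f) (x : R) :
    annSet R x = f ⁻¹' annSet S (f x) := by
  ext y
  simp only [annSet, Set.mem_ofPred_eq, Set.mem_preimage, ← map_mul, map_eq_zero_iff f hf]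

theorem map_mem_Zstar {f : F} (hf : Function.Injective f) {x : R} (hx : x ∈ Zstar R) :
    f x ∈ Zstar S := by
  obtain ⟨hx0, y, hy0, hxy⟩ := hx
  exact ⟨(map_ne_zero_iff f hf).mpr hx0, f y, (map_ne_zero_iff f hf).mpr hy0, by
    rw [← map_mul, hxy, map_zero]⟩

theorem RingEquiv.mem_Zstar_iff (e : R ≃+* S) {x : R} : e x ∈ Zstar S ↔ x ∈ Zstar R :=
  ⟨fun h => by simpa using map_mem_Zstar e.symm.injective h, map_mem_Zstar e.injective⟩

theorem RingEquiv.annSet_eq_annSet_iff (e : R ≃+* S) {x y : R} :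
    annSet R x = annSet R y ↔ annSet S (e x) = annSet S (e y) := by
  rw [annSet_eq_preimage e.injective x, annSet_eq_preimage e.injective y]
  exact (Set.preimage_injective.mpr e.surjective).eq_iff

variable [NoZeroDivisors R] [NoZeroDivisors S]

theorem annSet_prod (x : R × S) :
    annSet (R × S) x = {y | (x.1 = 0 ∨ y.1 = 0) ∧ (x.2 = 0 ∨ y.2 = 0)} := by
  ext y
  simp [annSet, Prod.ext_iff]

variable [Nontrivial R] [Nontrivial S]

theorem annSet_prod_eq_annSet_prod_iff {x x' : R × S} :
    annSet (R × S) x = annSet (R × S) x' ↔ (x.1 = 0 ↔ x'.1 = 0) ∧ (x.2 = 0 ↔ x'.2 = 0) := by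
  refine ⟨fun h => ⟨?_, ?_⟩, fun ⟨h1, h2⟩ => by simp only [annSet_prod, h1, h2]⟩
  · simpa [annSet_prod] using Set.ext_iff.mp h (1, 0)
  · simpa [annSet_prod] using Set.ext_iff.mp h (0, 1)

theorem mem_Zstar_prod_iff {x : R × S} :
    x ∈ Zstar (R × S) ↔ (x.1 = 0 ∧ x.2 ≠ 0) ∨ (x.1 ≠ 0 ∧ x.2 = 0) := by
  obtain ⟨a, b⟩ := x
  constructor
  · rintro ⟨hx, ⟨c, d⟩, hy, hxy⟩
    simp only [ne_eq, Prod.ext_iff, Prod.mk_mul_mk, Prod.fst_zero, Prod.snd_zero,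
      mul_eq_zero] at hx hy hxy ⊢
    tauto
  · rintro (⟨rfl, hb⟩ | ⟨ha, rfl⟩)
    · exact ⟨by simpa using hb, (1, 0), by simp, by simp⟩
    · exact ⟨by simpa using ha, (0, 1), by simp, by simp⟩

end Annihilator

section PrimeProduct

theorem ZMod.chineseRemainder_natCast {m n : ℕ} (h : m.Coprime n) (k : ℕ) :
    ZMod.chineseRemainder h k = ((k : ZMod m), (k : ZMod n)) := by
  simp [Prod.ext_iff]

theorem ZMod.natCast_ne_zero_of_prime_of_ne {q p : ℕ} (hq : q.Prime) (hp : p.Prime)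
    (hqp : q ≠ p) : (q : ZMod p) ≠ 0 := by
  rw [ne_eq, ZMod.natCast_eq_zero_iff, Nat.prime_dvd_prime_iff_eq hp hq]
  exact hqp.symm

variable {q p : ℕ}

theorem ZMod.natCast_mem_Zstar_mul_left [Fact q.Prime] [Fact p.Prime] (hqp : q ≠ p) :
    (q : ZMod (q * p)) ∈ Zstar (ZMod (q * p)) := by
  have hcop : q.Coprime p := (Nat.coprime_primes Fact.out Fact.out).mpr hqp
  rw [← (ZMod.chineseRemainder hcop).mem_Zstar_iff, ZMod.chineseRemainder_natCast,
    mem_Zstar_prod_iff]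
  simp [ZMod.natCast_ne_zero_of_prime_of_ne Fact.out Fact.out hqp]

theorem ZMod.natCast_mem_Zstar_mul_right [Fact q.Prime] [Fact p.Prime] (hqp : q ≠ p) :
    (p : ZMod (q * p)) ∈ Zstar (ZMod (q * p)) := by
  have hcop : q.Coprime p := (Nat.coprime_primes Fact.out Fact.out).mpr hqp
  rw [← (ZMod.chineseRemainder hcop).mem_Zstar_iff, ZMod.chineseRemainder_natCast,
    mem_Zstar_prod_iff]
  simp [ZMod.natCast_ne_zero_of_prime_of_ne Fact.out Fact.out hqp.symm]

theorem ZMod.annSet_natCast_mul_left_ne_right [Fact q.Prime] [Fact p.Prime] (hqp : q ≠ p) :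
    annSet (ZMod (q * p)) q ≠ annSet (ZMod (q * p)) p := by
  have hcop : q.Coprime p := (Nat.coprime_primes Fact.out Fact.out).mpr hqp
  rw [ne_eq, (ZMod.chineseRemainder hcop).annSet_eq_annSet_iff,
    ZMod.chineseRemainder_natCast, ZMod.chineseRemainder_natCast]
  simp [annSet_prod_eq_annSet_prod_iff,
    ZMod.natCast_ne_zero_of_prime_of_ne Fact.out Fact.out hqp.symm]

theorem ZMod.annSet_eq_natCast_left_or_right [Fact q.Prime] [Fact p.Prime] (hqp : q ≠ p)
    {x : ZMod (q * p)} (hx : x ∈ Zstar (ZMod (q * p))) :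
    annSet (ZMod (q * p)) x = annSet (ZMod (q * p)) q ∨
      annSet (ZMod (q * p)) x = annSet (ZMod (q * p)) p := by
  have hcop : q.Coprime p := (Nat.coprime_primes Fact.out Fact.out).mpr hqp
  rw [← (ZMod.chineseRemainder hcop).mem_Zstar_iff, mem_Zstar_prod_iff] at hx
  simp only [(ZMod.chineseRemainder hcop).annSet_eq_annSet_iff, ZMod.chineseRemainder_natCast,
    annSet_prod_eq_annSet_prod_iff, ZMod.natCast_self,
    ZMod.natCast_ne_zero_of_prime_of_ne Fact.out Fact.out hqp,
    ZMod.natCast_ne_zero_of_prime_of_ne Fact.out Fact.out hqp.symm]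
  tauto

end PrimeProduct

section CompressedGraph

variable {R : Type*} [CommRing R]

theorem CZDG.adj_mk_of_mul_eq_zero {a b : Zstar R} (hne : annSet R a ≠ annSet R b)
    (hab : (a : R) * b = 0) : (CZDG R).Adj ⟦a⟧ ⟦b⟧ :=
  ⟨fun h => hne (Quotient.exact h), a, b, rfl, rfl, hab⟩

theorem CZDVertex.eq_or_eq_of_forall_annSet {a b : Zstar R}
    (h : ∀ x ∈ Zstar R, annSet R x = annSet R a ∨ annSet R x = annSet R b)
    (v : CZDVertex R) : v = ⟦a⟧ ∨ v = ⟦b⟧ := by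
  induction v using Quotient.inductionOn with
  | h x => exact (h x x.2).imp Quotient.sound Quotient.sound

end CompressedGraph

/-- For an odd prime `p` and `n = 2p`, the nonzero zero-divisors of
`ℤ/n` fall into exactly two annihilator classes, those of `p` and of `2`, and
the corresponding two vertices of `Γ_E(ℤ/n)` are adjacent; hence
`Γ_E(ℤ/n) ≅ K_{1,1}` and `Ddim (Γ_E (ℤ/n)) = 1`. -/
theorem stmt_6 (p : ℕ) (hp : p.Prime) (hodd : p ≠ 2) :
    ∃ (hpz : (p : ZMod (2 * p)) ∈ Zstar (ZMod (2 * p)))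
      (h2z : (2 : ZMod (2 * p)) ∈ Zstar (ZMod (2 * p))),
      (∀ x ∈ Zstar (ZMod (2 * p)),
        annSet (ZMod (2 * p)) x = annSet (ZMod (2 * p)) (p : ZMod (2 * p)) ∨
        annSet (ZMod (2 * p)) x = annSet (ZMod (2 * p)) (2 : ZMod (2 * p))) ∧
      annSet (ZMod (2 * p)) (p : ZMod (2 * p)) ≠ annSet (ZMod (2 * p)) (2 : ZMod (2 * p)) ∧
      (CZDG (ZMod (2 * p))).Adj ⟦⟨(p : ZMod (2 * p)), hpz⟩⟧ ⟦⟨(2 : ZMod (2 * p)), h2z⟩⟧ ∧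
      Nonempty (CZDG (ZMod (2 * p)) ≃g (⊤ : SimpleGraph (Fin 2))) ∧
      Ddim (CZDG (ZMod (2 * p))) = 1 := by
  have : Fact p.Prime := ⟨hp⟩
  have h2p : 2 ≠ p := hodd.symm
  have hpz := ZMod.natCast_mem_Zstar_mul_right h2p
  have h2z : (2 : ZMod (2 * p)) ∈ Zstar (ZMod (2 * p)) := by
    simpa using ZMod.natCast_mem_Zstar_mul_left h2p
  have hclass : ∀ x ∈ Zstar (ZMod (2 * p)),
      annSet (ZMod (2 * p)) x = annSet (ZMod (2 * p)) (p : ZMod (2 * p)) ∨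
      annSet (ZMod (2 * p)) x = annSet (ZMod (2 * p)) (2 : ZMod (2 * p)) := fun x hx => by
    simpa [or_comm] using ZMod.annSet_eq_natCast_left_or_right h2p hx
  have hne : annSet (ZMod (2 * p)) p ≠ annSet (ZMod (2 * p)) 2 := by
    simpa [eq_comm] using ZMod.annSet_natCast_mul_left_ne_right h2p
  have hmul : (p : ZMod (2 * p)) * 2 = 0 := by
    simpa [mul_comm] using ZMod.natCast_self (2 * p)
  have hadj := CZDG.adj_mk_of_mul_eq_zero (a := ⟨_, hpz⟩) (b := ⟨_, h2z⟩) hne hmul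
  have hcover := CZDVertex.eq_or_eq_of_forall_annSet (a := ⟨_, hpz⟩) (b := ⟨_, h2z⟩) hclass
  exact ⟨hpz, h2z, hclass, hne, hadj, nonempty_iso_top_fin_two_of_forall_eq_or_eq hadj hcover,
    Ddim_eq_one_of_forall_eq_or_eq hadj hcover⟩
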